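/- Let 𝒢 be a sub-σ-field of ℋ, Ψ = P[A | 𝒢] a version of the conditional probability with values in [0,1], and B(t) = L({Ψ > t}, t) its Brier curve. Then B has at each t ∈ [0,1) the right derivative (d⁺/dt) B(t) = 1 − P[A] − P[Ψ ≤ t], and at each t ∈ (0,1] the left derivative (d⁻/dt) B(t) = 1 − P[A] − P[Ψ < t]. -/

import Mathlib

/-!
Since `{Ψ ≤ t}` is `𝒢`-measurable, `P[A ∩ {Ψ ≤ t}] = E[Ψ; Ψ ≤ t]`, and the loss collapses to
`B(t) = t (1 - P[A]) - E[(t - Ψ)⁺]`. The map `t ↦ (t - x)⁺` has right derivative `1{x ≤ t}` and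
left derivative `1{x < t}`; being `1`-Lipschitz, dominated convergence carries these one-sided
derivatives through the expectation.
-/

open MeasureTheory Filter Set Topology

noncomputable def cwLoss {Ω : Type*} {mΩ : MeasurableSpace Ω} (P : Measure Ω) (A H : Set Ω)
    (t : ℝ) : ℝ :=
  (1 - t) * (P (A ∩ Hᶜ)).toReal + t * (P (Aᶜ ∩ H)).toReal

theorem hasDerivWithinAt_max_sub_const_Ici (x t : ℝ) :
    HasDerivWithinAt (fun y => max (y - x) 0) ((Iic t).indicator 1 x) (Ici t) t := by
  by_cases hxt : x ≤ t
  · rw [indicator_of_mem (by exact hxt), Pi.one_apply]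
    refine ((hasDerivWithinAt_id t _).sub_const x).congr_of_mem (fun y hy => ?_) self_mem_Ici
    exact max_eq_left (sub_nonneg.2 (hxt.trans hy))
  · rw [indicator_of_notMem (by exact hxt)]
    refine (hasDerivWithinAt_const t _ 0).congr_of_eventuallyEq ?_ ?_
    · filter_upwards [nhdsWithin_le_nhds (Iio_mem_nhds (not_le.1 hxt))] with y hy
      exact max_eq_right (sub_nonpos.2 hy.le)
    · exact max_eq_right (sub_nonpos.2 (not_le.1 hxt).le)

theorem hasDerivWithinAt_max_sub_const_Iic (x t : ℝ) :
    HasDerivWithinAt (fun y => max (y - x) 0) ((Iio t).indicator 1 x) (Iic t) t := by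
  by_cases hxt : x < t
  · rw [indicator_of_mem (by exact hxt), Pi.one_apply]
    refine ((hasDerivWithinAt_id t _).sub_const x).congr_of_eventuallyEq ?_ ?_
    · filter_upwards [nhdsWithin_le_nhds (Ioi_mem_nhds hxt)] with y hy
      exact max_eq_left (sub_nonneg.2 hy.le)
    · exact max_eq_left (sub_nonneg.2 hxt.le)
  · rw [indicator_of_notMem (by exact hxt)]
    refine (hasDerivWithinAt_const t _ 0).congr_of_mem (fun y hy => ?_) self_mem_Iic
    exact max_eq_right (sub_nonpos.2 (le_trans hy (not_lt.1 hxt)))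

section ParametricIntegral

variable {Ω : Type*} {mΩ : MeasurableSpace Ω} {μ : Measure Ω} [IsFiniteMeasure μ]

theorem hasDerivWithinAt_integral_of_lipschitz {E : Type*} [NormedAddCommGroup E]
    [NormedSpace ℝ E] [CompleteSpace E] {F : ℝ → Ω → E} {F' : Ω → E} {s : Set ℝ} {t C : ℝ}
    (hF_int : ∀ y, Integrable (F y) μ) (hF_lip : ∀ y ω, ‖F y ω - F t ω‖ ≤ C * |y - t|)
    (hF' : ∀ ω, HasDerivWithinAt (F · ω) (F' ω) s t) :
    HasDerivWithinAt (fun y => ∫ ω, F y ω ∂μ) (∫ ω, F' ω ∂μ) s t := by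
  have h_slope (y : ℝ) :
      slope (fun y => ∫ ω, F y ω ∂μ) t y = ∫ ω, slope (F · ω) t y ∂μ := by
    simp only [slope_def_module, integral_smul, integral_sub (hF_int y) (hF_int t)]
  rw [hasDerivWithinAt_iff_tendsto_slope, funext h_slope]
  refine tendsto_integral_filter_of_dominated_convergence (fun _ => C)
    (Eventually.of_forall fun y => ?_) ?_ (integrable_const C)
    (Eventually.of_forall fun ω => hasDerivWithinAt_iff_tendsto_slope.1 (hF' ω))
  · simp only [slope_def_module]
    exact (((hF_int y).sub (hF_int t)).smul (y - t)⁻¹).aestronglyMeasurable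
  · filter_upwards [self_mem_nhdsWithin] with y hy
    have hyt : 0 < |y - t| := abs_pos.2 (sub_ne_zero.2 hy.2)
    refine Eventually.of_forall fun ω => ?_
    rw [slope_def_module, norm_smul, norm_inv, Real.norm_eq_abs, inv_mul_le_iff₀ hyt, mul_comm]
    exact hF_lip y ω

variable {X : Ω → ℝ}

theorem hasDerivWithinAt_integral_max_sub (hXm : Measurable X) (hX : Integrable X μ)
    {s : Set ℝ} {t : ℝ} {I : Set ℝ} (hI : MeasurableSet I)
    (hderiv : ∀ x, HasDerivWithinAt (fun y => max (y - x) 0) (I.indicator 1 x) s t) :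
    HasDerivWithinAt (fun y => ∫ ω, max (y - X ω) 0 ∂μ) (μ.real (X ⁻¹' I)) s t := by
  rw [← integral_indicator_one (hXm hI)]
  refine hasDerivWithinAt_integral_of_lipschitz (C := 1) (fun y => ?_) (fun y ω => ?_)
    (fun ω => hderiv (X ω))
  · exact ((integrable_const y).sub hX).pos_part
  · rw [one_mul, Real.norm_eq_abs]
    exact (abs_max_sub_max_le_abs _ _ _).trans_eq (by rw [sub_sub_sub_cancel_right])

theorem hasDerivWithinAt_integral_max_sub_Ici (hXm : Measurable X) (hX : Integrable X μ) (t : ℝ) :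
    HasDerivWithinAt (fun y => ∫ ω, max (y - X ω) 0 ∂μ) (μ.real {ω | X ω ≤ t}) (Ici t) t :=
  hasDerivWithinAt_integral_max_sub hXm hX measurableSet_Iic
    (hasDerivWithinAt_max_sub_const_Ici · t)

theorem hasDerivWithinAt_integral_max_sub_Iic (hXm : Measurable X) (hX : Integrable X μ) (t : ℝ) :
    HasDerivWithinAt (fun y => ∫ ω, max (y - X ω) 0 ∂μ) (μ.real {ω | X ω < t}) (Iic t) t :=
  hasDerivWithinAt_integral_max_sub hXm hX measurableSet_Iio
    (hasDerivWithinAt_max_sub_const_Iic · t)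

theorem integral_max_sub_zero_eq_sub_setIntegral (hXm : Measurable X) (hX : Integrable X μ)
    (t : ℝ) :
    ∫ ω, max (t - X ω) 0 ∂μ = t * μ.real {ω | X ω ≤ t} - ∫ ω in {ω | X ω ≤ t}, X ω ∂μ := by
  have hS : MeasurableSet {ω | X ω ≤ t} := hXm measurableSet_Iic
  have h_ind : (fun ω => max (t - X ω) 0) = {ω | X ω ≤ t}.indicator (fun ω => t - X ω) := by
    ext ω
    by_cases h : X ω ≤ t
    · simp [h]
    · simp [h, (not_le.1 h).le]
  rw [h_ind, integral_indicator hS, integral_sub (integrable_const t).integrableOn hX.integrableOn,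
    setIntegral_const, smul_eq_mul, mul_comm]

end ParametricIntegral

section ConditionalProbability

variable {Ω : Type*} {mΩ : MeasurableSpace Ω} {P : Measure Ω} {A : Set Ω}

theorem cwLoss_eq [IsProbabilityMeasure P] (hA : MeasurableSet A) {H : Set Ω}
    (hH : MeasurableSet H) (t : ℝ) :
    cwLoss P A H t = t * (1 - P.real A) + P.real (A ∩ Hᶜ) - t * P.real Hᶜ := by
  have h_split_A : P.real (A ∩ H) + P.real (A ∩ Hᶜ) = P.real A := by
    rw [← sdiff_eq]; exact measureReal_inter_add_sdiff hH
  have h_split_H : P.real (Aᶜ ∩ H) + P.real (A ∩ H) = P.real H := by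
    rw [inter_comm Aᶜ, inter_comm A, ← sdiff_eq]; exact measureReal_sdiff_add_inter hA
  have h_compl : P.real H + P.real Hᶜ = 1 := by
    rw [measureReal_add_measureReal_compl hH, probReal_univ]
  simp only [cwLoss, ← measureReal_def]
  linear_combination t * h_split_H - t * h_split_A + t * h_compl

theorem setIntegral_eq_measureReal_inter_of_ae_eq_condExp [IsFiniteMeasure P]
    (hA : MeasurableSet A) {m : MeasurableSpace Ω} (hm : m ≤ mΩ) {Ψ : Ω → ℝ}
    (hΨ : Ψ =ᵐ[P] P[A.indicator (fun _ => (1 : ℝ)) | m]) {S : Set Ω} (hS : MeasurableSet[m] S) :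
    ∫ ω in S, Ψ ω ∂P = P.real (A ∩ S) := by
  rw [setIntegral_congr_ae (hm S hS) (hΨ.mono fun ω h _ => h),
    setIntegral_condExp hm ((integrable_const (1 : ℝ)).indicator hA) hS, setIntegral_indicator hA,
    setIntegral_const, smul_eq_mul, mul_one, inter_comm]

theorem cwLoss_superlevelSet_eq_of_ae_eq_condExp [IsProbabilityMeasure P] (hA : MeasurableSet A)
    {m : MeasurableSpace Ω} (hm : m ≤ mΩ) {Ψ : Ω → ℝ} (hΨm : Measurable[m] Ψ)
    (hΨ : Ψ =ᵐ[P] P[A.indicator (fun _ => (1 : ℝ)) | m]) (t : ℝ) :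
    cwLoss P A {ω | Ψ ω > t} t = t * (1 - P.real A) - ∫ ω, max (t - Ψ ω) 0 ∂P := by
  have h_compl : {ω | Ψ ω > t}ᶜ = {ω | Ψ ω ≤ t} := by ext; simp
  have hΨm' : Measurable[mΩ] Ψ := hΨm.mono hm le_rfl
  rw [cwLoss_eq hA (H := {ω | Ψ ω > t}) (hΨm' measurableSet_Ioi) t, h_compl,
    integral_max_sub_zero_eq_sub_setIntegral hΨm' (integrable_condExp.congr hΨ.symm) t,
    setIntegral_eq_measureReal_inter_of_ae_eq_condExp hA hm hΨ (S := {ω | Ψ ω ≤ t})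
      (hΨm measurableSet_Iic)]
  ring

end ConditionalProbability

theorem brier_curve_one_sided_derivatives_general
    {Ω : Type*} {mΩ : MeasurableSpace Ω} {P : Measure Ω} [IsProbabilityMeasure P]
    {A : Set Ω} (hA : MeasurableSet A)
    {mH : MeasurableSpace Ω} (hH : mH ≤ mΩ)
    {mG : MeasurableSpace Ω} (hG : mG ≤ mH)
    {Ψ : Ω → ℝ} (hΨm : Measurable[mG] Ψ)
    (hΨ : Ψ =ᵐ[P] P[A.indicator (fun _ => (1 : ℝ)) | mG])
    (B : ℝ → ℝ) (hB : ∀ t, B t = cwLoss P A {ω | Ψ ω > t} t) :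
    (∀ t ∈ Set.Ico (0 : ℝ) 1,
      HasDerivWithinAt B (1 - (P A).toReal - (P {ω | Ψ ω ≤ t}).toReal) (Set.Ici t) t)
    ∧ (∀ t ∈ Set.Ioc (0 : ℝ) 1,
      HasDerivWithinAt B (1 - (P A).toReal - (P {ω | Ψ ω < t}).toReal) (Set.Iic t) t) := by
  have hm : mG ≤ mΩ := hG.trans hH
  have hB_eq : B = fun t => t * (1 - P.real A) - ∫ ω, max (t - Ψ ω) 0 ∂P :=
    funext fun t => (hB t).trans (cwLoss_superlevelSet_eq_of_ae_eq_condExp hA hm hΨm hΨ t)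
  have hΨm' : Measurable[mΩ] Ψ := hΨm.mono hm le_rfl
  have hΨi : Integrable Ψ P := integrable_condExp.congr hΨ.symm
  have h_linear (s : Set ℝ) (t : ℝ) :
      HasDerivWithinAt (fun t => t * (1 - P.real A)) (1 - P.real A) s t := by
    simpa using (hasDerivWithinAt_id t s).mul_const (1 - P.real A)
  rw [hB_eq]
  simp only [← measureReal_def]
  exact ⟨fun t _ => (h_linear _ t).sub (hasDerivWithinAt_integral_max_sub_Ici hΨm' hΨi t),
    fun t _ => (h_linear _ t).sub (hasDerivWithinAt_integral_max_sub_Iic hΨm' hΨi t)⟩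

/-- **Proposition 7, item 4 (one-sided derivatives of the Brier curve)**: for a `[0,1]`-valued
version `Ψ` of `P[A | 𝒢]`, `𝒢 ⊆ ℋ`, the Brier curve `B(t) = L({Ψ > t}, t)` has at each
`t ∈ [0, 1)` the right derivative `1 − P[A] − P[Ψ ≤ t]` and at each `t ∈ (0, 1]` the left
derivative `1 − P[A] − P[Ψ < t]`. -/
theorem brier_curve_one_sided_derivatives
    {Ω : Type*} {mΩ : MeasurableSpace Ω} {P : Measure Ω} [IsProbabilityMeasure P]
    {A : Set Ω} (hA : MeasurableSet A) (hA0 : 0 < P A) (hA1 : P A < 1)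
    {mH : MeasurableSpace Ω} (hH : mH ≤ mΩ) (hAH : ¬ MeasurableSet[mH] A)
    {mG : MeasurableSpace Ω} (hG : mG ≤ mH)
    {Ψ : Ω → ℝ} (hΨm : Measurable[mG] Ψ) (hΨ01 : ∀ ω, Ψ ω ∈ Set.Icc (0 : ℝ) 1)
    (hΨ : Ψ =ᵐ[P] P[A.indicator (fun _ => (1 : ℝ)) | mG])
    (B : ℝ → ℝ) (hB : ∀ t, B t = cwLoss P A {ω | Ψ ω > t} t) :
    (∀ t ∈ Set.Ico (0 : ℝ) 1,
      HasDerivWithinAt B (1 - (P A).toReal - (P {ω | Ψ ω ≤ t}).toReal) (Set.Ici t) t)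
    ∧ (∀ t ∈ Set.Ioc (0 : ℝ) 1,
      HasDerivWithinAt B (1 - (P A).toReal - (P {ω | Ψ ω < t}).toReal) (Set.Iic t) t) :=
  brier_curve_one_sided_derivatives_general hA hH hG hΨm hΨ B hB
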